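/- The complement family co-L₁ does not belong to 1N; that is, no polynomial-size family of 1nfa's over {0,1,#} solves {(L_n^{(−)},L_n^{(+)})}_{n∈ℕ}. -/

import Mathlib

/-! ## One-way nondeterministic finite automata -/

structure OneNFA (α : Type) : Type 1 where
  Q : Type
  [finQ : Fintype Q]
  start : Q
  next : Q → α → Set Q
  next_nonempty : ∀ q a, (next q a).Nonempty
  acc : Set Q

attribute [instance] OneNFA.finQ

namespace OneNFA

variable {α : Type}

/-- The state complexity (number of inner states). -/
def sc (M : OneNFA α) : ℕ := Fintype.card M.Q

/-- `p` is a computation path of `M` on input `x`. -/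
def IsPath (M : OneNFA α) (x : List α) (p : Fin (x.length + 1) → M.Q) : Prop :=
  p 0 = M.start ∧ ∀ i : Fin x.length, p i.succ ∈ M.next (p i.castSucc) (x.get i)

/-- `p` is an accepting computation path of `M` on input `x`. -/
def IsAccPath (M : OneNFA α) (x : List α) (p : Fin (x.length + 1) → M.Q) : Prop :=
  M.IsPath x p ∧ p (Fin.last x.length) ∈ M.acc

def Accepts (M : OneNFA α) (x : List α) : Prop := ∃ p, M.IsAccPath x p

/-- `M` is a 1dfa: every transition set is a singleton. -/
def Deterministic (M : OneNFA α) : Prop := ∀ q a, ∃ q', M.next q a = {q'}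

end OneNFA

/-! ## Families of promise problems -/

structure PromiseFamily (α : Type) where
  pos : ℕ → Set (List α)
  neg : ℕ → Set (List α)
  disj : ∀ n, Disjoint (pos n) (neg n)

namespace PromiseFamily

def valid {α : Type} (L : PromiseFamily α) (n : ℕ) : Set (List α) := L.pos n ∪ L.neg n

def co {α : Type} (L : PromiseFamily α) : PromiseFamily α :=
  ⟨L.neg, L.pos, fun n => (L.disj n).symm⟩

end PromiseFamily

/-- A family of promise problems over some finite alphabet. -/
structure Family : Type 1 where
  alph : Type
  [finA : Fintype alph]
  prob : PromiseFamily alph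

attribute [instance] Family.finA

def Family.co (F : Family) : Family := { alph := F.alph, prob := F.prob.co }

/-! ## One-way machine families -/

def Solves1 {α : Type} (M : ℕ → OneNFA α) (L : PromiseFamily α) : Prop :=
  ∀ n, (∀ x ∈ L.pos n, (M n).Accepts x) ∧ (∀ x ∈ L.neg n, ¬ (M n).Accepts x)

def PolySize1 {α : Type} (M : ℕ → OneNFA α) : Prop :=
  ∃ p : Polynomial ℕ, ∀ n, (M n).sc ≤ p.eval n

def Unambiguous1 {α : Type} (M : ℕ → OneNFA α) (L : PromiseFamily α) : Prop :=
  ∀ n, ∀ x ∈ L.valid n, {p | (M n).IsAccPath x p}.Subsingleton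

def AcceptFew1 {α : Type} (M : ℕ → OneNFA α) (L : PromiseFamily α) : Prop :=
  ∃ P : MvPolynomial (Fin 2) ℕ, ∀ n, ∀ x ∈ L.valid n,
    {p | (M n).IsAccPath x p}.ncard ≤ MvPolynomial.eval ![n, x.length] P

def WeaklyUnambiguous1 {α : Type} (M : ℕ → OneNFA α) (L : PromiseFamily α) : Prop :=
  ∀ n, ∀ x ∈ L.valid n, ∀ q : (M n).Q,
    {p | (M n).IsAccPath x p ∧ p (Fin.last x.length) = q}.Subsingleton

def ReachUnambiguous1 {α : Type} (M : ℕ → OneNFA α) (L : PromiseFamily α) : Prop :=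
  ∀ n, ∀ x ∈ L.valid n, ∀ i ≤ x.length, ∀ q : (M n).Q,
    {p : Fin ((x.take i).length + 1) → (M n).Q |
      (M n).IsPath (x.take i) p ∧ p (Fin.last (x.take i).length) = q}.Subsingleton

def ReachFew1 {α : Type} (M : ℕ → OneNFA α) (L : PromiseFamily α) : Prop :=
  ∃ P : MvPolynomial (Fin 2) ℕ, ∀ n, ∀ x ∈ L.valid n, ∀ i ≤ x.length, ∀ q : (M n).Q,
    {p : Fin ((x.take i).length + 1) → (M n).Q |
      (M n).IsPath (x.take i) p ∧ p (Fin.last (x.take i).length) = q}.ncard ≤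
      MvPolynomial.eval ![n, x.length] P

/-! ## One-way nonuniform state complexity classes -/

def oneN : Set Family :=
  {F | ∃ M : ℕ → OneNFA F.alph, PolySize1 M ∧ Solves1 M F.prob}

def oneD : Set Family :=
  {F | ∃ M : ℕ → OneNFA F.alph, PolySize1 M ∧ (∀ n, (M n).Deterministic) ∧ Solves1 M F.prob}

def oneU : Set Family :=
  {F | ∃ M : ℕ → OneNFA F.alph, PolySize1 M ∧ Unambiguous1 M F.prob ∧ Solves1 M F.prob}

def oneFew : Set Family :=
  {F | ∃ M : ℕ → OneNFA F.alph, PolySize1 M ∧ AcceptFew1 M F.prob ∧ Solves1 M F.prob}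

def oneFewU : Set Family :=
  {F | ∃ M : ℕ → OneNFA F.alph, PolySize1 M ∧ AcceptFew1 M F.prob ∧
        WeaklyUnambiguous1 M F.prob ∧ Solves1 M F.prob}

def oneReachU : Set Family :=
  {F | ∃ M : ℕ → OneNFA F.alph, PolySize1 M ∧ AcceptFew1 M F.prob ∧
        ReachUnambiguous1 M F.prob ∧ Solves1 M F.prob}

def oneReachFew : Set Family :=
  {F | ∃ M : ℕ → OneNFA F.alph, PolySize1 M ∧ AcceptFew1 M F.prob ∧
        ReachFew1 M F.prob ∧ Solves1 M F.prob}

def oneReachFewU : Set Family :=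
  {F | ∃ M : ℕ → OneNFA F.alph, PolySize1 M ∧ AcceptFew1 M F.prob ∧
        ReachFew1 M F.prob ∧ WeaklyUnambiguous1 M F.prob ∧ Solves1 M F.prob}

/-- The complement class `co-C`. -/
def coC (C : Set Family) : Set Family := {F | F.co ∈ C}
/-! ## Two-way nondeterministic finite automata -/

/-- A tape symbol: either an input symbol, the left endmarker `Sum.inr false`,
or the right endmarker `Sum.inr true`. -/
def TapeSym (α : Type) : Type := α ⊕ Bool

/-- The symbol held in cell `i` of the tape containing `▷x◁`. -/
def tapeAt {α : Type} (x : List α) (i : ℕ) : TapeSym α :=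
  if h0 : i = 0 then Sum.inr false
  else if h : i ≤ x.length then Sum.inl (x.get ⟨i - 1, by omega⟩)
  else Sum.inr true

structure TwoNFA (α : Type) : Type 1 where
  Q : Type
  [finQ : Fintype Q]
  start : Q
  acc : Set Q
  rej : Set Q
  acc_rej_disj : Disjoint acc rej
  next : Q → TapeSym α → Set (Q × ℤ)
  next_dir : ∀ q a t, t ∈ next q a → t.2 = -1 ∨ t.2 = 0 ∨ t.2 = 1

attribute [instance] TwoNFA.finQ

namespace TwoNFA

variable {α : Type}

def sc (M : TwoNFA α) : ℕ := Fintype.card M.Q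

def Halting (M : TwoNFA α) (q : M.Q) : Prop := q ∈ M.acc ∨ q ∈ M.rej

/-- Configuration `c` yields configuration `c'` in one step on input `x`. -/
def Yields (M : TwoNFA α) (x : List α) (c c' : M.Q × ℕ) : Prop :=
  ¬ M.Halting c.1 ∧ c.2 ≤ x.length + 1 ∧ c'.2 ≤ x.length + 1 ∧
    ∃ d : ℤ, (c'.1, d) ∈ M.next c.1 (tapeAt x c.2) ∧ (c'.2 : ℤ) = (c.2 : ℤ) + d

/-- A partial computation path of length `k` of `M` on `x`. -/
def IsPartialPath (M : TwoNFA α) (x : List α) (k : ℕ) (p : Fin (k + 1) → M.Q × ℕ) : Prop :=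
  p 0 = (M.start, 0) ∧ ∀ i : Fin k, M.Yields x (p i.castSucc) (p i.succ)

/-- A (full) computation path: the final configuration is the only halting one. -/
def IsCompPath (M : TwoNFA α) (x : List α) (k : ℕ) (p : Fin (k + 1) → M.Q × ℕ) : Prop :=
  M.IsPartialPath x k p ∧ ∀ i : Fin (k + 1), (M.Halting (p i).1 ↔ i = Fin.last k)

def IsAccPath (M : TwoNFA α) (x : List α) (k : ℕ) (p : Fin (k + 1) → M.Q × ℕ) : Prop :=
  M.IsCompPath x k p ∧ (p (Fin.last k)).1 ∈ M.acc

def Accepts (M : TwoNFA α) (x : List α) : Prop := ∃ k p, M.IsAccPath x k p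

def Deterministic (M : TwoNFA α) : Prop := ∀ q a, ∃ t, M.next q a = {t}

/-- The set of accepting computation paths of `M` on `x`. -/
def accPaths (M : TwoNFA α) (x : List α) : Set ((k : ℕ) × (Fin (k + 1) → M.Q × ℕ)) :=
  {kp | M.IsAccPath x kp.1 kp.2}

/-- The set of computation paths of `M` on `x` ending at configuration `conf`. -/
def compPathsTo (M : TwoNFA α) (x : List α) (conf : M.Q × ℕ) :
    Set ((k : ℕ) × (Fin (k + 1) → M.Q × ℕ)) :=
  {kp | M.IsCompPath x kp.1 kp.2 ∧ kp.2 (Fin.last kp.1) = conf}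

/-- The set of partial computation paths of `M` on `x` ending at configuration `conf`. -/
def partialPathsTo (M : TwoNFA α) (x : List α) (conf : M.Q × ℕ) :
    Set ((k : ℕ) × (Fin (k + 1) → M.Q × ℕ)) :=
  {kp | M.IsPartialPath x kp.1 kp.2 ∧ kp.2 (Fin.last kp.1) = conf}

end TwoNFA

/-! ## Two-way machine families -/

def Solves2 {α : Type} (M : ℕ → TwoNFA α) (L : PromiseFamily α) : Prop :=
  ∀ n, (∀ x ∈ L.pos n, (M n).Accepts x) ∧ (∀ x ∈ L.neg n, ¬ (M n).Accepts x)

def PolySize2 {α : Type} (M : ℕ → TwoNFA α) : Prop :=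
  ∃ p : Polynomial ℕ, ∀ n, (M n).sc ≤ p.eval n

def Unambiguous2 {α : Type} (M : ℕ → TwoNFA α) (L : PromiseFamily α) : Prop :=
  ∀ n, ∀ x ∈ L.valid n, ((M n).accPaths x).Subsingleton

def AcceptFew2 {α : Type} (M : ℕ → TwoNFA α) (L : PromiseFamily α) : Prop :=
  ∃ P : MvPolynomial (Fin 2) ℕ, ∀ n, ∀ x ∈ L.valid n,
    ((M n).accPaths x).encard ≤ (MvPolynomial.eval ![n, x.length] P : ℕ∞)

def WeaklyUnambiguous2 {α : Type} (M : ℕ → TwoNFA α) (L : PromiseFamily α) : Prop :=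
  ∀ n, ∀ x ∈ L.valid n, ∀ conf : (M n).Q × ℕ, conf.1 ∈ (M n).acc →
    ((M n).compPathsTo x conf).Subsingleton

def ReachUnambiguous2 {α : Type} (M : ℕ → TwoNFA α) (L : PromiseFamily α) : Prop :=
  ∀ n, ∀ x ∈ L.valid n, ∀ conf : (M n).Q × ℕ,
    ((M n).partialPathsTo x conf).Subsingleton

def ReachFew2 {α : Type} (M : ℕ → TwoNFA α) (L : PromiseFamily α) : Prop :=
  ∃ P : MvPolynomial (Fin 2) ℕ, ∀ n, ∀ x ∈ L.valid n, ∀ conf : (M n).Q × ℕ,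
    ((M n).partialPathsTo x conf).encard ≤ (MvPolynomial.eval ![n, x.length] P : ℕ∞)

/-! ## Two-way nonuniform state complexity classes -/

def twoN : Set Family :=
  {F | ∃ M : ℕ → TwoNFA F.alph, PolySize2 M ∧ Solves2 M F.prob}

def twoD : Set Family :=
  {F | ∃ M : ℕ → TwoNFA F.alph, PolySize2 M ∧ (∀ n, (M n).Deterministic) ∧ Solves2 M F.prob}

def twoU : Set Family :=
  {F | ∃ M : ℕ → TwoNFA F.alph, PolySize2 M ∧ Unambiguous2 M F.prob ∧ Solves2 M F.prob}

def twoFew : Set Family :=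
  {F | ∃ M : ℕ → TwoNFA F.alph, PolySize2 M ∧ AcceptFew2 M F.prob ∧ Solves2 M F.prob}

def twoFewU : Set Family :=
  {F | ∃ M : ℕ → TwoNFA F.alph, PolySize2 M ∧ AcceptFew2 M F.prob ∧
        WeaklyUnambiguous2 M F.prob ∧ Solves2 M F.prob}

def twoReachU : Set Family :=
  {F | ∃ M : ℕ → TwoNFA F.alph, PolySize2 M ∧ AcceptFew2 M F.prob ∧
        ReachUnambiguous2 M F.prob ∧ Solves2 M F.prob}

def twoReachFew : Set Family :=
  {F | ∃ M : ℕ → TwoNFA F.alph, PolySize2 M ∧ AcceptFew2 M F.prob ∧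
        ReachFew2 M F.prob ∧ Solves2 M F.prob}

def twoReachFewU : Set Family :=
  {F | ∃ M : ℕ → TwoNFA F.alph, PolySize2 M ∧ AcceptFew2 M F.prob ∧
        ReachFew2 M F.prob ∧ WeaklyUnambiguous2 M F.prob ∧ Solves2 M F.prob}

/-! ## Ceilings -/

/-- The family `F` has an `f(n)`-ceiling. -/
def HasCeiling (F : Family) (f : ℕ → ℕ) : Prop :=
  ∀ n, ∀ x ∈ F.prob.valid n, x.length ≤ f n

/-- The restriction `C/F` of a class `C` to families having an `f`-ceiling for some `f ∈ S`. -/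
def ceil (C : Set Family) (S : Set (ℕ → ℕ)) : Set Family :=
  {F | F ∈ C ∧ ∃ f ∈ S, HasCeiling F f}

def polyFuns : Set (ℕ → ℕ) := {f | ∃ p : Polynomial ℕ, ∀ n, f n = p.eval n}

/-- Super-exponential functions: `f(n) > 2^{p(n)}` for all but finitely many `n`,
for every polynomial `p`. -/
def supexpFuns : Set (ℕ → ℕ) :=
  {f | ∀ p : Polynomial ℕ, ∃ N, ∀ n ≥ N, 2 ^ p.eval n < f n}

/-- `F` has a logarithmic ceiling `ℓ(n) = a·log₂ n + b` with constants `a, b ≥ 0`. -/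
def HasLogCeiling (F : Family) : Prop :=
  ∃ a b : ℝ, 0 ≤ a ∧ 0 ≤ b ∧
    ∀ n, ∀ x ∈ F.prob.valid n, (x.length : ℝ) ≤ a * Real.logb 2 n + b

/-- The restriction `C/log` of a class `C` to families having logarithmic ceilings. -/
def ceilLog (C : Set Family) : Set Family := {F | F ∈ C ∧ HasLogCeiling F}
/-! ## The alphabet `{0, 1, #}` and encodings -/

inductive Sym3 : Type
  | zero | one | hash
deriving DecidableEq

instance : Fintype Sym3 :=
  ⟨{Sym3.zero, Sym3.one, Sym3.hash}, by intro x; cases x <;> simp⟩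

/-- The block `1^i 0^{m-i}`. -/
def block (m i : ℕ) : List Sym3 :=
  List.replicate i Sym3.one ++ List.replicate (m - i) Sym3.zero

lemma block_length {m i : ℕ} (h : i ≤ m) : (block m i).length = m := by
  simp [block]; omega

lemma block_count {m : ℕ} (i : ℕ) : (block m i).count Sym3.one = i := by
  simp [block, List.count_append, List.count_replicate]

lemma block_inj {m i j : ℕ} (h : block m i = block m j) : i = j := by
  have := block_count (m := m) i
  rw [h, block_count] at this
  omega

/-- The encoding `[[i₁,…,i_k]]_m` of a list of numbers. -/
def enc (m : ℕ) : List ℕ → List Sym3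
  | [] => []
  | [i] => block m i
  | i :: j :: rest => block m i ++ Sym3.zero :: enc m (j :: rest)

/-- Lists of length `k` with entries in `[n]`. -/
def ValidList (n k : ℕ) (l : List ℕ) : Prop :=
  l.length = k ∧ ∀ i ∈ l, 1 ≤ i ∧ i ≤ n

lemma enc_length {m : ℕ} :
    ∀ l : List ℕ, (∀ i ∈ l, i ≤ m) → (enc m l).length = l.length * (m + 1) - 1
  | [] => by simp [enc]
  | [i] => by
      intro h
      simp [enc, block_length (h i (by simp))]
  | i :: j :: rest => by
      intro h
      have ih := enc_length (j :: rest) (fun a ha => h a (List.mem_cons_of_mem _ ha))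
      have hb : (block m i).length = m := block_length (h i (List.mem_cons_self))
      show (block m i ++ Sym3.zero :: enc m (j :: rest)).length = _
      rw [List.length_append, hb, List.length_cons, ih]
      have hc : (i :: j :: rest).length = (j :: rest).length + 1 := by simp
      rw [hc]
      set L := (j :: rest).length with hLdef
      have hL : 1 ≤ L := by simp [hLdef]
      have h1 : (L + 1) * (m + 1) = L * (m + 1) + (m + 1) := by ring
      rw [h1]
      set P := L * (m + 1) with hPdef
      have hP : 1 ≤ P := by
        have := Nat.mul_le_mul hL (Nat.le_add_left 1 m)
        simpa [hPdef] using this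
      omega

lemma enc_ne_nil {m : ℕ} (i : ℕ) (rest : List ℕ) (hi : 1 ≤ i) :
    enc m (i :: rest) ≠ [] := by
  cases rest with
  | nil =>
      simp only [enc, block]
      intro h
      have := congrArg List.length h
      simp at this
      omega
  | cons j rest' =>
      simp only [enc]
      intro h
      have := congrArg List.length h
      simp at this

lemma enc_inj {m : ℕ} :
    ∀ u w : List ℕ, (∀ i ∈ u, 1 ≤ i ∧ i ≤ m) → (∀ i ∈ w, 1 ≤ i ∧ i ≤ m) →
      enc m u = enc m w → u = w
  | [], [], _, _, _ => rfl
  | [], j :: w', _, hw, h => by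
      exact absurd h.symm (enc_ne_nil j w' (hw j (by simp)).1)
  | i :: u', [], hu, _, h => by
      exact absurd h (enc_ne_nil i u' (hu i (by simp)).1)
  | [i], [j], hu, hw, h => by
      simp only [enc] at h
      rw [block_inj h]
  | [i], j :: b :: w', hu, hw, h => by
      exfalso
      have hl := congrArg List.length h
      rw [show enc m [i] = block m i from rfl,
        show enc m (j :: b :: w') = block m j ++ Sym3.zero :: enc m (b :: w') from rfl] at hl
      rw [List.length_append, List.length_cons,
        block_length (hu i (by simp)).2, block_length (hw j (by simp)).2] at hl
      omega
  | i :: a :: u', [j], hu, hw, h => by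
      exfalso
      have hl := congrArg List.length h
      rw [show enc m [j] = block m j from rfl,
        show enc m (i :: a :: u') = block m i ++ Sym3.zero :: enc m (a :: u') from rfl] at hl
      rw [List.length_append, List.length_cons,
        block_length (hu i (by simp)).2, block_length (hw j (by simp)).2] at hl
      omega
  | i :: a :: u', j :: b :: w', hu, hw, h => by
      rw [show enc m (i :: a :: u') = block m i ++ Sym3.zero :: enc m (a :: u') from rfl,
        show enc m (j :: b :: w') = block m j ++ Sym3.zero :: enc m (b :: w') from rfl] at h
      have hlen : (block m i).length = (block m j).length := by
        rw [block_length (hu i (by simp)).2, block_length (hw j (by simp)).2]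
      obtain ⟨h1, h2⟩ := List.append_inj h hlen
      have h3 : enc m (a :: u') = enc m (b :: w') := by
        simpa using h2
      have ih := enc_inj (a :: u') (b :: w')
        (fun x hx => hu x (List.mem_cons_of_mem _ hx))
        (fun x hx => hw x (List.mem_cons_of_mem _ hx)) h3
      rw [block_inj h1, ih]
/-! ## The promise problem family `L₁` -/

def L1pos (n : ℕ) : Set (List Sym3) :=
  {x | ∃ u v : List ℕ, ValidList n n u ∧ ValidList n n v ∧ u ≠ v ∧
        x = enc n u ++ Sym3.hash :: enc n v}

def L1neg (n : ℕ) : Set (List Sym3) :=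
  {x | ∃ u v : List ℕ, ValidList n n u ∧ ValidList n n v ∧ u = v ∧
        x = enc n u ++ Sym3.hash :: enc n v}

lemma L1_disj (n : ℕ) : Disjoint (L1pos n) (L1neg n) := by
  rw [Set.disjoint_left]
  rintro x ⟨u, v, hu, hv, huv, rfl⟩ ⟨u', v', hu', hv', huv', heq⟩
  have hlen : (enc n u).length = (enc n u').length := by
    rw [enc_length u (fun i hi => (hu.2 i hi).2),
      enc_length u' (fun i hi => (hu'.2 i hi).2), hu.1, hu'.1]
  obtain ⟨h1, h2⟩ := List.append_inj heq hlen
  have h2' : enc n v = enc n v' := by simpa using h2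
  have e1 : u = u' := enc_inj u u' hu.2 hu'.2 h1
  have e2 : v = v' := enc_inj v v' hv.2 hv'.2 h2'
  exact huv (by rw [e1, e2, huv'])

def L1prob : PromiseFamily Sym3 := ⟨L1pos, L1neg, L1_disj⟩

def L1fam : Family := { alph := Sym3, prob := L1prob }

/-! ## Matrices, their encodings, and the promise problem family `L₂` -/

/-- `R` represents an `n × n` matrix with entries in `[n]`, given as its list of rows. -/
def ValidMat (n : ℕ) (R : List (List ℕ)) : Prop :=
  R.length = n ∧ ∀ r ∈ R, ValidList n n r

/-- The encoding `[[D]]_n` of a matrix: its encoded rows joined by `#`. -/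
def encMat (n : ℕ) : List (List ℕ) → List Sym3
  | [] => []
  | [r] => enc n r
  | r :: s :: rest => enc n r ++ Sym3.hash :: encMat n (s :: rest)

lemma encMat_len {n : ℕ} :
    ∀ R : List (List ℕ), (∀ r ∈ R, ValidList n n r) →
      (encMat n R).length = R.length * (n * (n + 1) - 1 + 1) - 1
  | [] => by simp [encMat]
  | [r] => by
      intro h
      have hr := h r (by simp)
      have he : (enc n r).length = n * (n + 1) - 1 := by
        rw [enc_length r (fun i hi => (hr.2 i hi).2), hr.1]
      show (enc n r).length = ([r] : List (List ℕ)).length * (n * (n + 1) - 1 + 1) - 1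
      rw [he, show ([r] : List (List ℕ)).length = 1 from rfl]
      omega
  | r :: s :: rest => by
      intro h
      have ih := encMat_len (s :: rest) (fun a ha => h a (List.mem_cons_of_mem _ ha))
      have hr := h r (by simp)
      have he : (enc n r).length = n * (n + 1) - 1 := by
        rw [enc_length r (fun i hi => (hr.2 i hi).2), hr.1]
      show (enc n r ++ Sym3.hash :: encMat n (s :: rest)).length = _
      rw [List.length_append, he, List.length_cons, ih]
      have hc : (r :: s :: rest).length = (s :: rest).length + 1 := by simp
      rw [hc]
      set e := n * (n + 1) - 1 with hedef
      set L := (s :: rest).length with hLdef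
      have hL : 1 ≤ L := by simp [hLdef]
      have h1 : (L + 1) * (e + 1) = L * (e + 1) + (e + 1) := by ring
      rw [h1]
      set P := L * (e + 1) with hPdef
      have hP : 1 ≤ P := by
        calc 1 = 1 * 1 := by ring
        _ ≤ L * (e + 1) := Nat.mul_le_mul hL (by omega)
      omega

lemma encMat_inj {n : ℕ} :
    ∀ R W : List (List ℕ), (∀ r ∈ R, ValidList n n r) → (∀ r ∈ W, ValidList n n r) →
      R.length = W.length → encMat n R = encMat n W → R = W
  | [], [], _, _, _, _ => rfl
  | [], _ :: _, _, _, hl, _ => by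
      simp only [List.length_cons, List.length_nil] at hl
      omega
  | _ :: _, [], _, _, hl, _ => by
      simp only [List.length_cons, List.length_nil] at hl
      omega
  | [r], [w], hR, hW, _, h => by
      have := enc_inj r w (hR r (by simp)).2 (hW w (by simp)).2 h
      rw [this]
  | [r], w :: w' :: W', _, _, hl, _ => by
      simp only [List.length_cons, List.length_nil] at hl
      omega
  | r :: r' :: R', [w], _, _, hl, _ => by
      simp only [List.length_cons, List.length_nil] at hl
      omega
  | r :: r' :: R', w :: w' :: W', hR, hW, hl, h => by
      rw [show encMat n (r :: r' :: R') = enc n r ++ Sym3.hash :: encMat n (r' :: R') from rfl,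
        show encMat n (w :: w' :: W') = enc n w ++ Sym3.hash :: encMat n (w' :: W') from rfl] at h
      have hrlen : (enc n r).length = (enc n w).length := by
        have h1 := hR r (by simp); have h2 := hW w (by simp)
        rw [enc_length r (fun i hi => (h1.2 i hi).2),
          enc_length w (fun i hi => (h2.2 i hi).2), h1.1, h2.1]
      obtain ⟨h1, h2⟩ := List.append_inj h hrlen
      have h3 : encMat n (r' :: R') = encMat n (w' :: W') := by simpa using h2
      have ihr := enc_inj r w (hR r (by simp)).2 (hW w (by simp)).2 h1
      have ih := encMat_inj (r' :: R') (w' :: W')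
        (fun a ha => hR a (List.mem_cons_of_mem _ ha))
        (fun a ha => hW a (List.mem_cons_of_mem _ ha))
        (by simpa using hl) h3
      rw [ihr, ih]

/-- `SelSum R s` holds iff `s` is obtained by choosing one entry from each row of `R`
(the value `sum_D(σ)` for some choice function `σ`). -/
inductive SelSum : List (List ℕ) → ℕ → Prop
  | nil : SelSum [] 0
  | cons {a : ℕ} {r : List ℕ} {rest : List (List ℕ)} {s : ℕ} :
      a ∈ r → SelSum rest s → SelSum (r :: rest) (a + s)

def L2pos (n : ℕ) : Set (List Sym3) :=
  {x | ∃ R R' : List (List ℕ), ValidMat n R ∧ ValidMat n R' ∧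
        (∃ s : ℕ, SelSum R s ∧ SelSum R' s) ∧
        x = encMat n R ++ Sym3.hash :: Sym3.hash :: encMat n R'}

def L2neg (n : ℕ) : Set (List Sym3) :=
  {x | ∃ R R' : List (List ℕ), ValidMat n R ∧ ValidMat n R' ∧
        (∀ s s' : ℕ, SelSum R s → SelSum R' s' → s ≠ s') ∧
        x = encMat n R ++ Sym3.hash :: Sym3.hash :: encMat n R'}

lemma L2_disj (n : ℕ) : Disjoint (L2pos n) (L2neg n) := by
  rw [Set.disjoint_left]
  rintro x ⟨R, R', hR, hR', ⟨s, hs, hs'⟩, rfl⟩ ⟨W, W', hW, hW', hne, heq⟩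
  have hlen : (encMat n R).length = (encMat n W).length := by
    rw [encMat_len R hR.2, encMat_len W hW.2, hR.1, hW.1]
  obtain ⟨h1, h2⟩ := List.append_inj heq hlen
  have h2' : encMat n R' = encMat n W' := by simpa using h2
  have e1 : R = W := encMat_inj R W hR.2 hW.2 (by rw [hR.1, hW.1]) h1
  have e2 : R' = W' := encMat_inj R' W' hR'.2 hW'.2 (by rw [hR'.1, hW'.1]) h2'
  exact hne s s (e1 ▸ hs) (e2 ▸ hs') rfl

def L2prob : PromiseFamily Sym3 := ⟨L2pos, L2neg, L2_disj⟩

def L2fam : Family := { alph := Sym3, prob := L2prob }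
/-! ## One-way probabilistic finite automata data -/

/-- Product of the matrices of the symbols of a word. -/
noncomputable def wordMatrix {α Q : Type} [Fintype Q] [DecidableEq Q]
    (Mσ : TapeSym α → Matrix Q Q ℝ) (w : List (TapeSym α)) : Matrix Q Q ℝ :=
  (w.map Mσ).prod

/-- The tape word `▷ x ◁`. -/
def tapeWord {α : Type} (x : List α) : List (TapeSym α) :=
  Sum.inr false :: (x.map Sum.inl ++ [Sum.inr true])

/-- `p_{acc}(x : q)`: the `q`-entry of the row vector `ν · M_{▷x◁}`. -/
noncomputable def pacc {α Q : Type} [Fintype Q] [DecidableEq Q]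
    (ν : Q → ℝ) (Mσ : TapeSym α → Matrix Q Q ℝ) (x : List α) (q : Q) : ℝ :=
  Matrix.vecMul ν (wordMatrix Mσ (tapeWord x)) q
/-!
Fooling-set argument. For every `u : Fin n → Fin n` the word `[[u]] # [[u]]` is a yes-instance of
`co-L₁`, so an accepting run exists; the state it reaches right after the `#` determines `u`,
since otherwise the two halves of the runs for `u ≠ v` splice into an accepting run on the
no-instance `[[u]] # [[v]]`. Hence a solving 1nfa has at least `n ^ n` states, which outgrows
every polynomial.
-/

namespace OneNFA

variable {α : Type} (M : OneNFA α)

inductive Run : M.Q → List α → M.Q → Prop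
  | nil (q : M.Q) : Run q [] q
  | cons {q q' r : M.Q} {a : α} {w : List α} : q' ∈ M.next q a → Run q' w r → Run q (a :: w) r

variable {M}

theorem Run.append {q s r : M.Q} {u v : List α} (hu : M.Run q u s) (hv : M.Run s v r) :
    M.Run q (u ++ v) r := by
  induction hu with
  | nil => exact hv
  | cons hstep _ ih => exact .cons hstep (ih hv)

theorem Run.exists_of_append {q r : M.Q} {u v : List α} (h : M.Run q (u ++ v) r) :
    ∃ s, M.Run q u s ∧ M.Run s v r := by
  induction u generalizing q with
  | nil => exact ⟨q, .nil q, h⟩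
  | cons a u ih =>
    obtain _ | ⟨hstep, hrest⟩ := h
    obtain ⟨s, hus, hsv⟩ := ih hrest
    exact ⟨s, .cons hstep hus, hsv⟩

theorem run_of_steps {q : M.Q} :
    ∀ {x : List α} (p : Fin (x.length + 1) → M.Q), p 0 = q →
      (∀ i : Fin x.length, p i.succ ∈ M.next (p i.castSucc) (x.get i)) →
      M.Run q x (p (Fin.last x.length))
  | [], p, h0, _ => h0 ▸ .nil _
  | a :: x, p, h0, hsteps => by
    have htail := run_of_steps (x := x) (fun i => p i.succ) rfl fun i => hsteps i.succ
    exact .cons (h0 ▸ hsteps 0) htail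

theorem Run.exists_steps {q r : M.Q} {x : List α} (h : M.Run q x r) :
    ∃ p : Fin (x.length + 1) → M.Q, p 0 = q ∧
      (∀ i : Fin x.length, p i.succ ∈ M.next (p i.castSucc) (x.get i)) ∧
      p (Fin.last x.length) = r := by
  induction h with
  | nil q => exact ⟨fun _ => q, rfl, fun i => i.elim0, rfl⟩
  | @cons q q' r a w hstep _ ih =>
    obtain ⟨p, hp0, hsteps, hlast⟩ := ih
    refine ⟨Fin.cons q p, rfl, fun i => ?_, hlast⟩
    cases i using Fin.cases with
    | zero => simpa [hp0] using hstep
    | succ i => simpa using hsteps i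

theorem accepts_iff_run {x : List α} : M.Accepts x ↔ ∃ r ∈ M.acc, M.Run M.start x r := by
  constructor
  · rintro ⟨p, ⟨hp0, hsteps⟩, hacc⟩
    exact ⟨_, hacc, run_of_steps p hp0 hsteps⟩
  · rintro ⟨r, hr, hrun⟩
    obtain ⟨p, hp0, hsteps, hlast⟩ := hrun.exists_steps
    exact ⟨p, ⟨hp0, hsteps⟩, hlast ▸ hr⟩

theorem card_le_sc_of_fooling {ι : Type} [Fintype ι] (x y : ι → List α)
    (hacc : ∀ i, M.Accepts (x i ++ y i)) (hrej : ∀ i j, M.Accepts (x i ++ y j) → i = j) :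
    Fintype.card ι ≤ M.sc := by
  have hsplit : ∀ i, ∃ s, M.Run M.start (x i) s ∧ ∃ r ∈ M.acc, M.Run s (y i) r := fun i => by
    obtain ⟨r, hr, hrun⟩ := accepts_iff_run.1 (hacc i)
    obtain ⟨s, hxs, hsy⟩ := hrun.exists_of_append
    exact ⟨s, hxs, r, hr, hsy⟩
  choose s hxs r hr hsy using hsplit
  refine Fintype.card_le_of_injective s fun i j hij => hrej i j ?_
  exact accepts_iff_run.2 ⟨r j, hr j, (hxs i).append (hij ▸ hsy j)⟩

end OneNFA

theorem Polynomial.eval_le_eval_one_mul_pow (P : Polynomial ℕ) {n : ℕ} (hn : 1 ≤ n) :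
    P.eval n ≤ P.eval 1 * n ^ P.natDegree := by
  rw [Polynomial.eval_eq_sum_range, Polynomial.eval_eq_sum_range, Finset.sum_mul]
  refine Finset.sum_le_sum fun i hi => ?_
  simp only [one_pow, mul_one]
  exact Nat.mul_le_mul_left _ (Nat.pow_le_pow_right hn (Finset.mem_range_succ_iff.1 hi))

theorem Polynomial.exists_eval_lt_pow_self (P : Polynomial ℕ) : ∃ n : ℕ, P.eval n < n ^ n := by
  set d := P.natDegree
  set n := P.eval 1 + d + 2
  refine ⟨n, ?_⟩
  calc P.eval n ≤ P.eval 1 * n ^ d := P.eval_le_eval_one_mul_pow (by omega)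
    _ < n * n ^ d := Nat.mul_lt_mul_of_pos_right (by omega) (by positivity)
    _ = n ^ (d + 1) := (pow_succ' n d).symm
    _ ≤ n ^ n := Nat.pow_le_pow_right (by omega) (by omega)

/-- `u` shifted by one, so that its values lie in `[n] = {1, …, n}` as `ValidList` requires. -/
def codeRow (n : ℕ) (u : Fin n → Fin n) : List ℕ := List.ofFn fun i => (u i : ℕ) + 1

theorem codeRow_injective (n : ℕ) : Function.Injective (codeRow n) := fun u v h => by
  funext i
  exact Fin.ext (by simpa using congrFun (List.ofFn_injective h) i)

theorem validList_codeRow (n : ℕ) (u : Fin n → Fin n) : ValidList n n (codeRow n u) := by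
  refine ⟨by simp [codeRow], fun i hi => ?_⟩
  obtain ⟨j, rfl⟩ := List.mem_ofFn.1 hi
  exact ⟨by omega, (u j).isLt⟩

theorem pow_self_le_sc_of_solves_co_L1 {M : OneNFA Sym3} {n : ℕ}
    (hsolve : (∀ x ∈ L1neg n, M.Accepts x) ∧ ∀ x ∈ L1pos n, ¬ M.Accepts x) : n ^ n ≤ M.sc := by
  have hword : ∀ u v, enc n (codeRow n u) ++ [Sym3.hash] ++ enc n (codeRow n v) =
      enc n (codeRow n u) ++ Sym3.hash :: enc n (codeRow n v) := by simp
  have hcard := OneNFA.card_le_sc_of_fooling (M := M)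
    (fun u => enc n (codeRow n u) ++ [Sym3.hash]) (fun u => enc n (codeRow n u))
    (fun u => hsolve.1 _ ⟨_, _, validList_codeRow n u, validList_codeRow n u, rfl, hword u u⟩)
    fun u v huv => by_contra fun hne => hsolve.2 _
      ⟨_, _, validList_codeRow n u, validList_codeRow n v,
        (codeRow_injective n).ne hne, hword u v⟩ huv
  simpa using hcard

/-- The complement family `co-L₁` does not belong to `1N`. -/
theorem co_L1_not_mem_oneN : L1fam.co ∉ oneN := by
  rintro ⟨M, ⟨P, hP⟩, hsolve⟩
  obtain ⟨n, hn⟩ := P.exists_eval_lt_pow_self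
  exact (hn.trans_le (pow_self_le_sc_of_solves_co_L1 (hsolve n))).not_ge (hP n)
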